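/- (Inductive step of the N-control-treatment causal bound.) Let N ≥ 2. Suppose the (N−1)-treatment bound holds, i.e., Σ_{j=2}^{N} ( (1/(N−1))·q₁·ε¹_F + q_j·εʲ_F - q_j·ε^{1,j}_CF - (1/(N−1))·q₁·εʲ_CF ) ≤ Σ_{j=2}^{N} ( q_j·ψ^{1,j} + (1/(N−1))·q₁·ψʲ + q_j·δ^{1,j} + (1/(N−1))·q₁·δʲ ). Then, provided the loss function L satisfies the loss-difference inequality and all relevant integrands are integrable, the N-treatment bound holds: Σ_{j=2}^{N+1} ( (1/N)·q₁·ε¹_F + q_j·εʲ_F - q_j·ε^{1,j}_CF - (1/N)·q₁·εʲ_CF ) ≤ Σ_{j=2}^{N+1} ( q_j·ψ^{1,j} + (1/N)·q₁·ψʲ + q_j·δ^{1,j} + (1/N)·q₁·δʲ ). -/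
import Mathlib


open MeasureTheory ProbabilityTheory

lemma suft_key (ν₂ ν₁ : Measure ℝ) [IsProbabilityMeasure ν₂] [IsProbabilityMeasure ν₁]
    (L : ℝ → ℝ → ℝ) (hL : ∀ x y x' y', L x y - L x' y' ≤ L x x' + L y y') (v u : ℝ)
    (h2 : Integrable (fun y => L y v) ν₂) (h1 : Integrable (fun y => L y u) ν₁)
    (hp : Integrable (fun p : ℝ × ℝ => L p.1 p.2) (ν₂.prod ν₁)) :
    (∫ y, L y v ∂ν₂) - (∫ y, L y u ∂ν₁) ≤ L v u + ∫ a, (∫ b, L a b ∂ν₁) ∂ν₂ := by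
  have hae : ∀ᵐ a ∂ν₂, Integrable (fun b => L a b) ν₁ := hp.prod_right_ae
  have hint : Integrable (fun a => ∫ b, L a b ∂ν₁) ν₂ := hp.integral_prod_left
  have step : (∫ y, L y v ∂ν₂) - (∫ y, L y u ∂ν₁)
      = ∫ a, (L a v - ∫ b, L b u ∂ν₁) ∂ν₂ := by
    rw [integral_sub h2 (integrable_const _)]
    simp
  rw [step]
  have : ∫ a, (L v u + ∫ b, L a b ∂ν₁) ∂ν₂ = L v u + ∫ a, (∫ b, L a b ∂ν₁) ∂ν₂ := by
    rw [integral_add (integrable_const _) hint]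
    simp
  rw [← this]
  refine integral_mono_ae (h2.sub (integrable_const _)) ((integrable_const _).add hint) ?_
  filter_upwards [hae] with a hIa
  have e1 : L a v - ∫ b, L b u ∂ν₁ = ∫ b, (L a v - L b u) ∂ν₁ := by
    rw [integral_sub (integrable_const _) h1]
    simp
  have e2 : ∫ b, (L a b + L v u) ∂ν₁ = (∫ b, L a b ∂ν₁) + L v u := by
    rw [integral_add hIa (integrable_const _)]
    simp
  calc L a v - ∫ b, L b u ∂ν₁ = ∫ b, (L a v - L b u) ∂ν₁ := e1
    _ ≤ ∫ b, (L a b + L v u) ∂ν₁ :=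
        integral_mono ((integrable_const _).sub h1) (hIa.add (integrable_const _))
          (fun b => hL a v b u)
    _ = L v u + ∫ b, L a b ∂ν₁ := by rw [e2]; ring


/-- (Inductive step of the N-control-treatment causal bound.) Let `N ≥ 2` and suppose
the `(N−1)`-treatment bound holds:
`Σ_{j=2}^{N} ( (1/(N−1))·q₁·ε¹_F + q_j·εʲ_F - q_j·ε^{1,j}_CF - (1/(N−1))·q₁·εʲ_CF )
  ≤ Σ_{j=2}^{N} ( q_j·ψ^{1,j} + (1/(N−1))·q₁·ψʲ + q_j·δ^{1,j} + (1/(N−1))·q₁·δʲ )`.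
Then, provided the loss function `L` satisfies the loss-difference inequality and all
relevant integrands are integrable, the `N`-treatment bound holds:
`Σ_{j=2}^{N+1} ( (1/N)·q₁·ε¹_F + q_j·εʲ_F - q_j·ε^{1,j}_CF - (1/N)·q₁·εʲ_CF )
  ≤ Σ_{j=2}^{N+1} ( q_j·ψ^{1,j} + (1/N)·q₁·ψʲ + q_j·δ^{1,j} + (1/N)·q₁·δʲ )`. -/
theorem suft_causal_bound_inductive_step
    {X : Type*} [MeasurableSpace X] (N : ℕ) (hN : 2 ≤ N)
    (P : ℕ → Measure X) (κ : ℕ → Kernel X ℝ) (φ : ℕ → X → ℝ) (q : ℕ → ℝ)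
    (hP : ∀ t ∈ Finset.Icc 1 (N + 1), IsProbabilityMeasure (P t))
    (hκ : ∀ t ∈ Finset.Icc 1 (N + 1), IsMarkovKernel (κ t))
    (hq : ∀ t ∈ Finset.Icc 1 (N + 1), 0 ≤ q t)
    (L : ℝ → ℝ → ℝ) (hL0 : ∀ u v, 0 ≤ L u v)
    (hL : ∀ x y x' y', L x y - L x' y' ≤ L x x' + L y y')
    (hInner : ∀ t ∈ Finset.Icc 1 (N + 1), ∀ x, Integrable (fun y => L y (φ t x)) (κ t x))
    (hOuter : ∀ s ∈ Finset.Icc 1 (N + 1), ∀ t ∈ Finset.Icc 1 (N + 1),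
      Integrable (fun x => ∫ y, L y (φ t x) ∂(κ t x)) (P s))
    (hψ : ∀ s ∈ Finset.Icc 1 (N + 1), ∀ t ∈ Finset.Icc 1 (N + 1),
      Integrable (fun x => L (φ s x) (φ t x)) (P s))
    (hProd : ∀ s ∈ Finset.Icc 1 (N + 1), ∀ t ∈ Finset.Icc 1 (N + 1), ∀ x,
      Integrable (fun p : ℝ × ℝ => L p.1 p.2) (((κ s) x).prod ((κ t) x)))
    (hδ : ∀ s ∈ Finset.Icc 1 (N + 1), ∀ t ∈ Finset.Icc 1 (N + 1),
      Integrable (fun x => ∫ ys, (∫ yt, L ys yt ∂(κ t x)) ∂(κ s x)) (P s))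
    (ih : ∑ j ∈ Finset.Icc 2 N,
            ((1 / ((N : ℝ) - 1)) * q 1 * (∫ x, (∫ y, L y (φ 1 x) ∂(κ 1 x)) ∂(P 1))
              + q j * (∫ x, (∫ y, L y (φ j x) ∂(κ j x)) ∂(P j))
              - q j * (∫ x, (∫ y, L y (φ 1 x) ∂(κ 1 x)) ∂(P j))
              - (1 / ((N : ℝ) - 1)) * q 1 * (∫ x, (∫ y, L y (φ j x) ∂(κ j x)) ∂(P 1)))
          ≤ ∑ j ∈ Finset.Icc 2 N,
              (q j * (∫ x, L (φ j x) (φ 1 x) ∂(P j))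
                + (1 / ((N : ℝ) - 1)) * q 1 * (∫ x, L (φ 1 x) (φ j x) ∂(P 1))
                + q j * (∫ x, (∫ yj, (∫ y1, L yj y1 ∂(κ 1 x)) ∂(κ j x)) ∂(P j))
                + (1 / ((N : ℝ) - 1)) * q 1
                    * (∫ x, (∫ y1, (∫ yj, L y1 yj ∂(κ j x)) ∂(κ 1 x)) ∂(P 1)))) :
    ∑ j ∈ Finset.Icc 2 (N + 1),
        ((1 / (N : ℝ)) * q 1 * (∫ x, (∫ y, L y (φ 1 x) ∂(κ 1 x)) ∂(P 1))
          + q j * (∫ x, (∫ y, L y (φ j x) ∂(κ j x)) ∂(P j))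
          - q j * (∫ x, (∫ y, L y (φ 1 x) ∂(κ 1 x)) ∂(P j))
          - (1 / (N : ℝ)) * q 1 * (∫ x, (∫ y, L y (φ j x) ∂(κ j x)) ∂(P 1)))
      ≤ ∑ j ∈ Finset.Icc 2 (N + 1),
          (q j * (∫ x, L (φ j x) (φ 1 x) ∂(P j))
            + (1 / (N : ℝ)) * q 1 * (∫ x, L (φ 1 x) (φ j x) ∂(P 1))
            + q j * (∫ x, (∫ yj, (∫ y1, L yj y1 ∂(κ 1 x)) ∂(κ j x)) ∂(P j))
            + (1 / (N : ℝ)) * q 1 * (∫ x, (∫ y1, (∫ yj, L y1 yj ∂(κ j x)) ∂(κ 1 x)) ∂(P 1))) := by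
  
  refine Finset.sum_le_sum ?_
  intro j hj
  have hjmem : j ∈ Finset.Icc 1 (N + 1) := by
    simp only [Finset.mem_Icc] at hj ⊢; omega
  have h1mem : (1 : ℕ) ∈ Finset.Icc 1 (N + 1) := by
    simp only [Finset.mem_Icc]; omega
  haveI := hκ j hjmem
  haveI := hκ 1 h1mem
  haveI := hP j hjmem
  haveI := hP 1 h1mem
  -- pointwise bounds
  have hA : ∀ x, (∫ y, L y (φ j x) ∂(κ j x)) - (∫ y, L y (φ 1 x) ∂(κ 1 x))
      ≤ L (φ j x) (φ 1 x) + ∫ yj, (∫ y1, L yj y1 ∂(κ 1 x)) ∂(κ j x) := fun x =>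
    suft_key (κ j x) (κ 1 x) L hL (φ j x) (φ 1 x) (hInner j hjmem x) (hInner 1 h1mem x)
      (hProd j hjmem 1 h1mem x)
  have hB : ∀ x, (∫ y, L y (φ 1 x) ∂(κ 1 x)) - (∫ y, L y (φ j x) ∂(κ j x))
      ≤ L (φ 1 x) (φ j x) + ∫ y1, (∫ yj, L y1 yj ∂(κ j x)) ∂(κ 1 x) := fun x =>
    suft_key (κ 1 x) (κ j x) L hL (φ 1 x) (φ j x) (hInner 1 h1mem x) (hInner j hjmem x)
      (hProd 1 h1mem j hjmem x)
  -- integrated bounds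
  have hAint : (∫ x, (∫ y, L y (φ j x) ∂(κ j x)) ∂(P j))
        - (∫ x, (∫ y, L y (φ 1 x) ∂(κ 1 x)) ∂(P j))
      ≤ (∫ x, L (φ j x) (φ 1 x) ∂(P j))
        + (∫ x, (∫ yj, (∫ y1, L yj y1 ∂(κ 1 x)) ∂(κ j x)) ∂(P j)) := by
    rw [← integral_sub (hOuter j hjmem j hjmem) (hOuter j hjmem 1 h1mem),
      ← integral_add (hψ j hjmem 1 h1mem) (hδ j hjmem 1 h1mem)]
    exact integral_mono ((hOuter j hjmem j hjmem).sub (hOuter j hjmem 1 h1mem))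
      ((hψ j hjmem 1 h1mem).add (hδ j hjmem 1 h1mem)) hA
  have hBint : (∫ x, (∫ y, L y (φ 1 x) ∂(κ 1 x)) ∂(P 1))
        - (∫ x, (∫ y, L y (φ j x) ∂(κ j x)) ∂(P 1))
      ≤ (∫ x, L (φ 1 x) (φ j x) ∂(P 1))
        + (∫ x, (∫ y1, (∫ yj, L y1 yj ∂(κ j x)) ∂(κ 1 x)) ∂(P 1)) := by
    rw [← integral_sub (hOuter 1 h1mem 1 h1mem) (hOuter 1 h1mem j hjmem),
      ← integral_add (hψ 1 h1mem j hjmem) (hδ 1 h1mem j hjmem)]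
    exact integral_mono ((hOuter 1 h1mem 1 h1mem).sub (hOuter 1 h1mem j hjmem))
      ((hψ 1 h1mem j hjmem).add (hδ 1 h1mem j hjmem)) hB
  have hqj : 0 ≤ q j := hq j hjmem
  have hq1 : 0 ≤ q 1 := hq 1 h1mem
  have hc : 0 ≤ 1 / (N : ℝ) * q 1 := by positivity
  have h1 := mul_le_mul_of_nonneg_left hAint hqj
  have h2 := mul_le_mul_of_nonneg_left hBint hc
  nlinarith [h1, h2]
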